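/- arXiv:2208.09807 — 6 statements merged into one kernel-verified Lean document; each statement's English description precedes it below -/
import Mathlib

section
/- Let U : ℝ → ℝ be C² with U(1) = 0 and U'(t) > 0 for all t, let G : ℝ → ℝ be continuous with m_G ≤ G(t) ≤ M_G for 0 ≤ t ≤ 1 where 0 < m_G < M_G, and let b > 0 with U(0)² < b². Then there exist constants m_U, M_U > 0 with m_U ≤ U'(t) ≤ M_U on [0,1], and for every v ≤ 0, setting λ₁ = 2m_U/√M_G, one has 2U(e^v)/(√(G(e^v))·√(1 - U(e^v)²/b²)) ≤ λ₁(e^v - 1). -/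
open Real Set

/-- under the structural assumptions on `U` and `G`, there are bounds
`0 < m_U ≤ U' ≤ M_U` on `[0,1]`, and with `λ₁ = 2m_U/√M_G` the pointwise subsolution
inequality `2U(e^v)/(√G(e^v)·√(1-U(e^v)²/b²)) ≤ λ₁(e^v - 1)` holds for all `v ≤ 0`. -/
theorem stmt5 (U G : ℝ → ℝ) (b m_G M_G : ℝ)
    (hU : ContDiff ℝ 2 U) (hU1 : U 1 = 0) (hU' : ∀ t, 0 < deriv U t)
    (hGcont : Continuous G)
    (hGbd : ∀ t ∈ Icc (0:ℝ) 1, m_G ≤ G t ∧ G t ≤ M_G)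
    (hmG : 0 < m_G) (hmMG : m_G < M_G)
    (hb : 0 < b) (hUb : (U 0)^2 < b^2) :
    ∃ m_U M_U : ℝ, 0 < m_U ∧ 0 < M_U ∧
      (∀ t ∈ Icc (0:ℝ) 1, m_U ≤ deriv U t ∧ deriv U t ≤ M_U) ∧
      ∀ v : ℝ, v ≤ 0 →
        2 * U (Real.exp v) /
            (Real.sqrt (G (Real.exp v)) * Real.sqrt (1 - (U (Real.exp v))^2 / b^2))
          ≤ (2 * m_U / Real.sqrt M_G) * (Real.exp v - 1) := by
  have hderivCont : Continuous (deriv U) := hU.continuous_deriv one_le_two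
  have hUdiff : Differentiable ℝ U := hU.differentiable two_ne_zero
  obtain ⟨t₀, ht₀, hmin⟩ := isCompact_Icc.exists_isMinOn (s := Icc (0:ℝ) 1)
    ⟨0, left_mem_Icc.mpr zero_le_one⟩ (hderivCont.continuousOn)
  obtain ⟨t₁, ht₁, hmax⟩ := isCompact_Icc.exists_isMaxOn (s := Icc (0:ℝ) 1)
    ⟨0, left_mem_Icc.mpr zero_le_one⟩ (hderivCont.continuousOn)
  set m_U := deriv U t₀ with hmU
  set M_U := deriv U t₁ with hMU
  have hmUpos : 0 < m_U := hU' t₀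
  have hMUpos : 0 < M_U := hU' t₁
  have hMGpos : 0 < M_G := hmG.trans hmMG
  have hsMG : 0 < Real.sqrt M_G := Real.sqrt_pos.mpr hMGpos
  have hmono : StrictMono U := strictMono_of_deriv_pos hU'
  refine ⟨m_U, M_U, hmUpos, hMUpos, fun t ht => ⟨hmin ht, hmax ht⟩, fun v hv => ?_⟩
  set x := Real.exp v with hx
  have hx0 : 0 < x := Real.exp_pos v
  have hx1 : x ≤ 1 := Real.exp_le_one_iff.mpr hv
  have hUx0 : U x ≤ 0 := by
    rcases lt_or_eq_of_le hx1 with h | h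
    · exact le_of_lt (hU1 ▸ hmono h)
    · rw [h, hU1]
  -- key: U x ≤ m_U * (x - 1)
  have hkey : U x ≤ m_U * (x - 1) := by
    rcases lt_or_eq_of_le hx1 with h | h
    · obtain ⟨c, hc, hceq⟩ := exists_deriv_eq_slope U h
        (hUdiff.continuous.continuousOn) (hUdiff.differentiableOn)
      have hcmem : c ∈ Icc (0:ℝ) 1 := ⟨le_of_lt (hx0.trans hc.1), le_of_lt hc.2⟩
      have h1 : m_U ≤ deriv U c := hmin hcmem
      have h2 : deriv U c = (0 - U x) / (1 - x) := by rw [hceq, hU1]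
      have h3 : (0 - U x) / (1 - x) ≥ m_U := h2 ▸ h1
      have h4 : m_U * (1 - x) ≤ 0 - U x := by
        rw [ge_iff_le, le_div_iff₀ (by linarith)] at h3
        linarith
      linarith
    · rw [h, hU1]; simp
  -- U x ^ 2 < b ^ 2
  have hUmonot : U 0 ≤ U x := hmono.monotone (le_of_lt hx0)
  have hUxsq : (U x)^2 ≤ (U 0)^2 := by nlinarith
  have h1sub : 0 < 1 - (U x)^2 / b^2 := by
    have : (U x)^2 / b^2 < 1 := by
      rw [div_lt_one (by positivity)]; exact lt_of_le_of_lt hUxsq hUb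
    linarith
  have hGx := hGbd x ⟨le_of_lt hx0, hx1⟩
  have hsGpos : 0 < Real.sqrt (G x) :=
    Real.sqrt_pos.mpr (lt_of_lt_of_le hmG hGx.1)
  have hden : 0 < Real.sqrt (G x) * Real.sqrt (1 - (U x)^2 / b^2) :=
    mul_pos hsGpos (Real.sqrt_pos.mpr h1sub)
  have hdenle : Real.sqrt (G x) * Real.sqrt (1 - (U x)^2 / b^2) ≤ Real.sqrt M_G := by
    have h1 : Real.sqrt (G x) ≤ Real.sqrt M_G := Real.sqrt_le_sqrt hGx.2
    have h2 : Real.sqrt (1 - (U x)^2 / b^2) ≤ 1 := by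
      have h0 : 0 ≤ (U x)^2 / b^2 := by positivity
      calc Real.sqrt (1 - (U x)^2 / b^2) ≤ Real.sqrt 1 :=
            Real.sqrt_le_sqrt (by linarith)
        _ = 1 := Real.sqrt_one
    calc Real.sqrt (G x) * Real.sqrt (1 - (U x)^2 / b^2)
        ≤ Real.sqrt M_G * 1 := mul_le_mul h1 h2 (Real.sqrt_nonneg _) hsMG.le
      _ = Real.sqrt M_G := mul_one _
  have hnum : 2 * U x ≤ 0 := by linarith
  calc 2 * U x / (Real.sqrt (G x) * Real.sqrt (1 - (U x)^2 / b^2))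
      ≤ 2 * U x / Real.sqrt M_G := by
        have := div_le_div_of_nonneg_left (a := -(2 * U x)) (by linarith) hden hdenle
        rw [neg_div, neg_div, neg_le_neg_iff] at this
        exact this
    _ ≤ 2 * m_U / Real.sqrt M_G * (x - 1) := by
        rw [div_mul_eq_mul_div, div_le_div_iff₀ hsMG hsMG]
        nlinarith [hsMG.le]
end

section
/- Suppose u : ℝ² → ℝ is C², u(x) → 0 as |x| → ∞, and there exist R > 0 and a function c : ℝ² → ℝ with c(x) ≥ M > 0 for |x| ≥ R such that Δu(x) = c(x)·u(x) for all |x| ≥ R, and u ≤ 0 everywhere. Then for every 0 < m < M there exists C > 0 with |u(x)| ≤ C·e^{-√m |x|} for |x| ≥ R. -/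
open Real Filter

noncomputable section

abbrev E2 := EuclideanSpace ℝ (Fin 2)

/-- The standard Laplacian on `ℝ²`. -/
noncomputable def lap (f : E2 → ℝ) (x : E2) : ℝ :=
  ∑ i : Fin 2, iteratedDeriv 2 (fun t : ℝ => f (x + t • EuclideanSpace.single i (1:ℝ))) 0

lemma keyDeriv (s r a : ℝ) (hr : 0 < r) :
    iteratedDeriv 2 (fun t : ℝ => Real.exp (-s * Real.sqrt (r^2 + 2*a*t + t^2))) 0
      = (s^2 * a^2 / r^2 - s * (r^2 - a^2) / r^3) * Real.exp (-s * r) := by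
  set Q : ℝ → ℝ := fun t => r^2 + 2*a*t + t^2 with hQdef
  have hQ0 : Q 0 = r^2 := by simp [hQdef]
  have hQ0pos : 0 < Q 0 := by rw [hQ0]; positivity
  have hsQ0 : Real.sqrt (Q 0) = r := by rw [hQ0]; exact Real.sqrt_sq hr.le
  have hU : IsOpen {t : ℝ | 0 < Q t} := by
    have : Continuous Q := by fun_prop
    exact isOpen_lt continuous_const this
  have hU0 : {t : ℝ | 0 < Q t} ∈ nhds (0:ℝ) := hU.mem_nhds hQ0pos
  have hQd : ∀ t : ℝ, HasDerivAt Q (2*a + 2*t) t := by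
    intro t
    have h1 : HasDerivAt (fun t : ℝ => r^2 + 2*a*t + t^2) (0 + 2*a*1 + 2*t^1) t := by
      exact ((hasDerivAt_const t (r^2)).add ((hasDerivAt_id t).const_mul (2*a))).add
        (hasDerivAt_pow 2 t)
    convert h1 using 1; ring_nf
  have hN : ∀ t : ℝ, 0 < Q t → HasDerivAt (fun t => Real.sqrt (Q t))
      (1 / (2 * Real.sqrt (Q t)) * (2*a + 2*t)) t := by
    intro t ht
    exact (Real.hasDerivAt_sqrt ht.ne').comp t (hQd t)
  -- derivative of F on the open set
  have hF : ∀ t : ℝ, 0 < Q t → HasDerivAt (fun t => Real.exp (-s * Real.sqrt (Q t)))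
      (Real.exp (-s * Real.sqrt (Q t)) * (-s * (1 / (2 * Real.sqrt (Q t)) * (2*a + 2*t)))) t := by
    intro t ht
    exact (Real.hasDerivAt_exp _).comp t ((hN t ht).const_mul (-s))
  set G : ℝ → ℝ := fun t => Real.exp (-s * Real.sqrt (Q t)) * (-s * ((a + t) / Real.sqrt (Q t)))
    with hGdef
  have hEq : deriv (fun t => Real.exp (-s * Real.sqrt (Q t))) =ᶠ[nhds 0] G := by
    filter_upwards [hU0] with t ht
    have h := (hF t ht).deriv
    rw [h, hGdef]
    have hs : Real.sqrt (Q t) ≠ 0 := (Real.sqrt_pos.2 ht).ne'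
    field_simp
  have h2 : iteratedDeriv 2 (fun t => Real.exp (-s * Real.sqrt (Q t))) 0
      = deriv G 0 := by
    rw [show (2:ℕ) = 1 + 1 from rfl, iteratedDeriv_succ, iteratedDeriv_one]
    exact hEq.deriv_eq
  rw [h2]
  -- compute deriv G 0
  have hN0 : HasDerivAt (fun t => Real.sqrt (Q t)) (a / r) 0 := by
    have h := hN 0 hQ0pos
    convert h using 1
    rw [hsQ0]; field_simp; ring
  have hE : HasDerivAt (fun t => Real.exp (-s * Real.sqrt (Q t)))
      (Real.exp (-s * Real.sqrt (Q 0)) * (-s * (a / r))) 0 :=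
    (Real.hasDerivAt_exp _).comp 0 (hN0.const_mul (-s))
  have hnum : HasDerivAt (fun t : ℝ => a + t) 1 0 := by
    simpa using (hasDerivAt_id' (0:ℝ)).const_add a
  have hP : HasDerivAt (fun t => (a + t) / Real.sqrt (Q t))
      ((1 * Real.sqrt (Q 0) - (a + 0) * (a / r)) / Real.sqrt (Q 0) ^ 2) 0 := by
    refine hnum.div hN0 ?_
    rw [hsQ0]; exact hr.ne'
  have hG : HasDerivAt G
      ((Real.exp (-s * Real.sqrt (Q 0)) * (-s * (a / r))) * (-s * ((a + 0) / Real.sqrt (Q 0)))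
        + Real.exp (-s * Real.sqrt (Q 0)) *
          (-s * ((1 * Real.sqrt (Q 0) - (a + 0) * (a / r)) / Real.sqrt (Q 0) ^ 2))) 0 :=
    hE.mul (hP.const_mul (-s))
  rw [hG.deriv, hsQ0]
  field_simp
  ring

lemma norm_line (x : E2) (i : Fin 2) (t : ℝ) :
    ‖x + t • EuclideanSpace.single i (1:ℝ)‖ = Real.sqrt (‖x‖^2 + 2*(x i)*t + t^2) := by
  have h1 : ‖x + t • EuclideanSpace.single i (1:ℝ)‖^2
      = ‖x‖^2 + 2*(x i)*t + t^2 := by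
    rw [norm_add_sq_real]
    have hinner : inner ℝ x (t • EuclideanSpace.single i (1:ℝ)) = t * (x i) := by
      rw [real_inner_smul_right]
      have : inner ℝ x (EuclideanSpace.single i (1:ℝ)) = (x i) := by
        rw [real_inner_comm]
        simp [EuclideanSpace.inner_single_left]
      rw [this]
    rw [hinner]
    have hn : ‖t • EuclideanSpace.single i (1:ℝ)‖ = |t| := by
      rw [norm_smul, EuclideanSpace.norm_single]
      simp
    rw [hn]
    rw [sq_abs]
    ring
  rw [← h1, Real.sqrt_sq (norm_nonneg _)]

lemma lap_g (m : ℝ) (hm : 0 < m) (x : E2) (hx : 0 < ‖x‖) :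
    lap (fun y => Real.exp (-Real.sqrt m * ‖y‖)) x
      = (m - Real.sqrt m / ‖x‖) * Real.exp (-Real.sqrt m * ‖x‖) := by
  have hsum : (x 0)^2 + (x 1)^2 = ‖x‖^2 := by
    have h := EuclideanSpace.norm_eq x
    rw [h, Real.sq_sqrt (by positivity)]
    simp [Fin.sum_univ_two, sq_abs]
  have hs2 : Real.sqrt m ^ 2 = m := Real.sq_sqrt hm.le
  unfold lap
  have hcoord : ∀ i : Fin 2,
      iteratedDeriv 2 (fun t : ℝ =>
        Real.exp (-Real.sqrt m * ‖x + t • EuclideanSpace.single i (1:ℝ)‖)) 0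
      = (Real.sqrt m^2 * (x i)^2 / ‖x‖^2 - Real.sqrt m * (‖x‖^2 - (x i)^2) / ‖x‖^3)
          * Real.exp (-Real.sqrt m * ‖x‖) := by
    intro i
    have : (fun t : ℝ =>
        Real.exp (-Real.sqrt m * ‖x + t • EuclideanSpace.single i (1:ℝ)‖))
        = (fun t : ℝ => Real.exp (-Real.sqrt m * Real.sqrt (‖x‖^2 + 2*(x i)*t + t^2))) := by
      funext t; rw [norm_line]
    rw [this, keyDeriv _ _ _ hx]
  rw [Fin.sum_univ_two, hcoord 0, hcoord 1]
  have hr := hx.ne'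
  simp only [neg_mul]
  field_simp
  linear_combination (Real.sqrt m + ‖x‖*m) * hsum + ‖x‖*((x 0)^2+(x 1)^2) * hs2

lemma contDiffAt_deriv' {f : ℝ → ℝ} {x : ℝ} (hf : ContDiffAt ℝ 2 f x) :
    ContDiffAt ℝ 1 (deriv f) x := by
  have h := hf.fderiv_right (m := 1) (by norm_num)
  have heq : deriv f = fun y => (fderiv ℝ f y) 1 := by
    funext y; rfl
  rw [heq]
  exact (ContinuousLinearMap.apply ℝ ℝ (1:ℝ)).contDiff.contDiffAt.comp x h

lemma iteratedDeriv_two_eq (f : ℝ → ℝ) : iteratedDeriv 2 f = deriv (deriv f) := by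
  rw [show (2:ℕ) = 1 + 1 from rfl, iteratedDeriv_succ, iteratedDeriv_one]

lemma iteratedDeriv_two_add_smul (f g : ℝ → ℝ) (C : ℝ)
    (hf : ∀ᶠ t in nhds (0:ℝ), ContDiffAt ℝ 2 f t)
    (hg : ∀ᶠ t in nhds (0:ℝ), ContDiffAt ℝ 2 g t) :
    iteratedDeriv 2 (fun t => f t + C * g t) 0
      = iteratedDeriv 2 f 0 + C * iteratedDeriv 2 g 0 := by
  have h1 : deriv (fun t => f t + C * g t) =ᶠ[nhds (0:ℝ)]
      (fun t => deriv f t + C * deriv g t) := by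
    filter_upwards [hf, hg] with t htf htg
    rw [deriv_fun_add (htf.differentiableAt two_ne_zero)
      ((htg.differentiableAt two_ne_zero).const_mul C),
      deriv_const_mul C (htg.differentiableAt two_ne_zero)]
  rw [iteratedDeriv_two_eq, iteratedDeriv_two_eq, iteratedDeriv_two_eq, h1.deriv_eq]
  have hdf : DifferentiableAt ℝ (deriv f) 0 :=
    (contDiffAt_deriv' hf.self_of_nhds).differentiableAt one_ne_zero
  have hdg : DifferentiableAt ℝ (deriv g) 0 :=
    (contDiffAt_deriv' hg.self_of_nhds).differentiableAt one_ne_zero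
  rw [deriv_fun_add hdf (hdg.const_mul C), deriv_const_mul C hdg]

lemma second_deriv_nonneg_of_isLocalMin (f : ℝ → ℝ)
    (hf : ∀ᶠ t in nhds (0:ℝ), ContDiffAt ℝ 2 f t) (hmin : IsLocalMin f 0) :
    0 ≤ iteratedDeriv 2 f 0 := by
  rw [iteratedDeriv_two_eq]
  by_contra hcon
  push_neg at hcon
  have hf0 : ContDiffAt ℝ 2 f 0 := hf.self_of_nhds
  have hD : HasDerivAt (deriv f) (deriv (deriv f) 0) 0 :=
    ((contDiffAt_deriv' hf0).differentiableAt one_ne_zero).hasDerivAt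
  have h0 : deriv f 0 = 0 := hmin.deriv_eq_zero
  have hslope := hasDerivAt_iff_tendsto_slope.mp hD
  have hneg : ∀ᶠ t in nhdsWithin (0:ℝ) (Set.Ioi 0), deriv f t < 0 := by
    have h1 : ∀ᶠ z in nhds (deriv (deriv f) 0), z < 0 := eventually_lt_nhds hcon
    have h2 := hslope.eventually h1
    have h3 : ∀ᶠ t in nhdsWithin (0:ℝ) (Set.Ioi 0), slope (deriv f) 0 t < 0 :=
      h2.filter_mono (nhdsWithin_mono 0 (fun t ht => ne_of_gt ht))
    filter_upwards [h3, self_mem_nhdsWithin] with t ht htpos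
    have htp : (0:ℝ) < t := htpos
    have hsl : slope (deriv f) 0 t = deriv f t / t := by
      rw [slope_def_field, h0, sub_zero, sub_zero]
    rw [hsl] at ht
    have : deriv f t = (deriv f t / t) * t := by field_simp
    rw [this]
    exact mul_neg_of_neg_of_pos ht htp
  have hmin' : ∀ᶠ t in nhds (0:ℝ), f 0 ≤ f t := hmin
  obtain ⟨ε, hε, hball⟩ := Metric.eventually_nhds_iff.mp (hf.and hmin')
  obtain ⟨v, hv, hsub⟩ := mem_nhdsGT_iff_exists_Ioo_subset.mp hneg
  set δ : ℝ := min (ε/2) (v/2) with hδdef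
  have hδ : 0 < δ := lt_min (by linarith) (by simpa using half_pos (Set.mem_Ioi.mp hv))
  have hδε : δ < ε := lt_of_le_of_lt (min_le_left _ _) (by linarith)
  have hδv : δ < v := lt_of_le_of_lt (min_le_right _ _) (by
    have := Set.mem_Ioi.mp hv; linarith)
  have hIcc : ∀ t ∈ Set.Icc (0:ℝ) δ, dist t 0 < ε := by
    intro t ht
    rw [Real.dist_eq, sub_zero, abs_of_nonneg ht.1]
    exact lt_of_le_of_lt ht.2 hδε
  have hcont : ContinuousOn f (Set.Icc 0 δ) := fun t ht =>
    ((hball (hIcc t ht)).1.continuousAt).continuousWithinAt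
  have hderiv : ∀ t ∈ interior (Set.Icc (0:ℝ) δ), deriv f t < 0 := by
    intro t ht
    rw [interior_Icc] at ht
    exact hsub ⟨ht.1, lt_trans ht.2 hδv⟩
  have hanti := strictAntiOn_of_deriv_neg (convex_Icc 0 δ) hcont hderiv
  have hlt : f δ < f 0 := hanti (Set.left_mem_Icc.mpr hδ.le) (Set.right_mem_Icc.mpr hδ.le) hδ
  have hge : f 0 ≤ f δ := (hball (y := δ) (by rw [Real.dist_eq, sub_zero, abs_of_nonneg hδ.le]; exact hδε)).2
  linarith

/-- exponential decay via comparison. If `u ≤ 0` is `C²`, tends to `0`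
at infinity, and `Δu = c·u` with `c ≥ M > 0` for `|x| ≥ R`, then for each `0 < m < M`
one has `|u(x)| ≤ C e^{-√m |x|}` for `|x| ≥ R`. -/
theorem stmt7 (u c : E2 → ℝ) (R M : ℝ) (hR : 0 < R) (hM : 0 < M)
    (hu : ContDiff ℝ 2 u)
    (hu0 : Filter.Tendsto u (Filter.cocompact E2) (nhds 0))
    (hc : ∀ x : E2, R ≤ ‖x‖ → M ≤ c x)
    (heq : ∀ x : E2, R ≤ ‖x‖ → lap u x = c x * u x)
    (hneg : ∀ x : E2, u x ≤ 0) :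
    ∀ m : ℝ, 0 < m → m < M →
      ∃ C : ℝ, 0 < C ∧ ∀ x : E2, R ≤ ‖x‖ →
        |u x| ≤ C * Real.exp (-Real.sqrt m * ‖x‖) := by
  intro m hm hmM
  set s := Real.sqrt m with hsdef
  have hs : 0 < s := Real.sqrt_pos.2 hm
  obtain ⟨B, hB⟩ := (isCompact_sphere (0:E2) R).exists_bound_of_continuousOn
    (hu.continuous.continuousOn)
  set C := (|B| + 1) * Real.exp (s * R) with hCdef
  have hC : 0 < C := by positivity
  refine ⟨C, hC, ?_⟩
  set g : E2 → ℝ := fun x => Real.exp (-s * ‖x‖) with hgdef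
  set w : E2 → ℝ := fun x => u x + C * g x with hwdef
  have hgpos : ∀ x : E2, 0 < g x := fun x => Real.exp_pos _
  -- boundary positivity
  have hbdry : ∀ x : E2, ‖x‖ = R → 0 < w x := by
    intro x hx
    have h1 : ‖u x‖ ≤ B := hB x (by simp [hx])
    have h2 : -|B| ≤ u x := by
      have := neg_abs_le (u x)
      have hb := le_abs_self B
      rw [Real.norm_eq_abs] at h1
      linarith
    have hprod : Real.exp (s*R) * Real.exp (-s*R) = 1 := by
      rw [← Real.exp_add]; ring_nf; exact Real.exp_zero
    have h3 : C * g x = |B| + 1 := by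
      rw [hCdef, hgdef]; simp only; rw [hx]
      calc (|B| + 1) * Real.exp (s * R) * Real.exp (-s * R)
          = (|B| + 1) * (Real.exp (s*R) * Real.exp (-s*R)) := by ring
        _ = |B| + 1 := by rw [hprod, mul_one]
    simp only [hwdef]
    rw [h3]
    linarith
  -- main claim: w ≥ 0 on the exterior
  have hclaim : ∀ x : E2, R ≤ ‖x‖ → 0 ≤ w x := by
    by_contra hcon
    push_neg at hcon
    obtain ⟨y0, hy0R, hy0⟩ := hcon
    have hgten : Tendsto g (cocompact E2) (nhds 0) := by
      have h1 : Tendsto (fun x : E2 => ‖x‖) (cocompact E2) atTop :=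
        tendsto_norm_cocompact_atTop
      have h2 : Tendsto (fun r : ℝ => -s * r) atTop atBot :=
        tendsto_id.const_mul_atTop_of_neg (neg_neg_iff_pos.mpr hs)
      exact Real.tendsto_exp_atBot.comp (h2.comp h1)
    have hwt : Tendsto w (cocompact E2) (nhds 0) := by
      have h := hu0.add (hgten.const_mul C)
      rw [show (0:ℝ) = 0 + C * 0 by ring]
      exact h
    have hev : ∀ᶠ x in cocompact E2, w y0 < w x := hwt.eventually (eventually_gt_nhds hy0)
    obtain ⟨K, hK, hKsub⟩ := mem_cocompact.mp hev
    have hScl : IsClosed {x : E2 | R ≤ ‖x‖} := isClosed_le continuous_const continuous_norm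
    have hK' : IsCompact (K ∩ {x : E2 | R ≤ ‖x‖}) := hK.inter_right hScl
    have hy0K : y0 ∈ K ∩ {x : E2 | R ≤ ‖x‖} := by
      refine ⟨?_, hy0R⟩
      by_contra h
      exact absurd (show w y0 < w y0 from hKsub h) (lt_irrefl _)
    have hwc : Continuous w := by
      apply hu.continuous.add
      exact continuous_const.mul (Real.continuous_exp.comp (continuous_const.mul continuous_norm))
    obtain ⟨x0, hx0mem, hx0min⟩ := hK'.exists_isMinOn ⟨y0, hy0K⟩ hwc.continuousOn
    have hmin : ∀ x : E2, R ≤ ‖x‖ → w x0 ≤ w x := by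
      intro x hx
      by_cases hk : x ∈ K
      · exact hx0min ⟨hk, hx⟩
      · exact le_trans (hx0min hy0K) (le_of_lt (hKsub hk))
    have hx0neg : w x0 < 0 := lt_of_le_of_lt (hx0min hy0K) hy0
    have hx0Rge : R ≤ ‖x0‖ := hx0mem.2
    have hx0R : R < ‖x0‖ := by
      rcases lt_or_eq_of_le hx0Rge with h | h
      · exact h
      · exact absurd hx0neg (not_lt.mpr (hbdry x0 h.symm).le)
    have hx0pos : (0:ℝ) < ‖x0‖ := lt_trans hR hx0R
    have hx0ne : x0 ≠ 0 := by
      intro h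
      rw [h, norm_zero] at hx0pos
      exact lt_irrefl _ hx0pos
    have hlocmin : IsLocalMin w x0 := by
      have hopen : ∀ᶠ x in nhds x0, R < ‖x‖ :=
        (isOpen_lt continuous_const continuous_norm).eventually_mem hx0R
      filter_upwards [hopen] with x hx using hmin x hx.le
    -- per-coordinate setup
    have hLc : ∀ i : Fin 2, ContDiff ℝ 2
        (fun t : ℝ => x0 + t • EuclideanSpace.single i (1:ℝ)) := by
      intro i
      exact contDiff_const.add (contDiff_id.smul contDiff_const)
    have hL0 : ∀ i : Fin 2, x0 + (0:ℝ) • EuclideanSpace.single i (1:ℝ) = x0 := by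
      intro i; simp
    have hevne : ∀ i : Fin 2, ∀ᶠ t in nhds (0:ℝ),
        x0 + t • EuclideanSpace.single i (1:ℝ) ≠ 0 := by
      intro i
      have hct : ContinuousAt (fun t : ℝ => x0 + t • EuclideanSpace.single i (1:ℝ)) 0 :=
        (hLc i).continuous.continuousAt
      exact hct.eventually_ne (by rw [hL0 i]; exact hx0ne)
    have hφu : ∀ i : Fin 2, ∀ᶠ t in nhds (0:ℝ), ContDiffAt ℝ 2
        (fun t : ℝ => u (x0 + t • EuclideanSpace.single i (1:ℝ))) t :=
      fun i => Eventually.of_forall fun t => (hu.comp (hLc i)).contDiffAt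
    have hφg : ∀ i : Fin 2, ∀ᶠ t in nhds (0:ℝ), ContDiffAt ℝ 2
        (fun t : ℝ => g (x0 + t • EuclideanSpace.single i (1:ℝ))) t := by
      intro i
      filter_upwards [hevne i] with t ht
      have h1 : ContDiffAt ℝ 2 (fun t : ℝ => ‖x0 + t • EuclideanSpace.single i (1:ℝ)‖) t :=
        (contDiffAt_norm ℝ ht).comp t (hLc i).contDiffAt
      exact (Real.contDiff_exp.contDiffAt).comp t (contDiffAt_const.mul h1)
    have hφw : ∀ i : Fin 2, ∀ᶠ t in nhds (0:ℝ), ContDiffAt ℝ 2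
        (fun t : ℝ => w (x0 + t • EuclideanSpace.single i (1:ℝ))) t := by
      intro i
      filter_upwards [hφu i, hφg i] with t h1 h2
      exact h1.add (contDiffAt_const.mul h2)
    -- lap of w at x0 is nonnegative
    have hlapw : 0 ≤ lap w x0 := by
      unfold lap
      apply Finset.sum_nonneg
      intro i _
      apply second_deriv_nonneg_of_isLocalMin _ (hφw i)
      have ht : Tendsto (fun t : ℝ => x0 + t • EuclideanSpace.single i (1:ℝ))
          (nhds 0) (nhds x0) := by
        simpa using ((hLc i).continuous.tendsto (0:ℝ))
      have hev2 := ht.eventually hlocmin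
      unfold IsLocalMin IsMinFilter
      simpa using hev2
    -- lap splits
    have hsplit : lap w x0 = lap u x0 + C * lap g x0 := by
      unfold lap
      have : ∀ i : Fin 2,
          iteratedDeriv 2 (fun t : ℝ => w (x0 + t • EuclideanSpace.single i (1:ℝ))) 0
          = iteratedDeriv 2 (fun t : ℝ => u (x0 + t • EuclideanSpace.single i (1:ℝ))) 0
            + C * iteratedDeriv 2 (fun t : ℝ => g (x0 + t • EuclideanSpace.single i (1:ℝ))) 0 := by
        intro i
        exact iteratedDeriv_two_add_smul _ _ C (hφu i) (hφg i)
      rw [Fin.sum_univ_two, Fin.sum_univ_two, Fin.sum_univ_two, this 0, this 1]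
      ring
    have hlapg : lap g x0 = (m - s / ‖x0‖) * g x0 := lap_g m hm x0 hx0pos
    have hlapu : lap u x0 = c x0 * u x0 := heq x0 hx0Rge
    -- derive contradiction
    have hux0 : u x0 < -(C * g x0) := by
      have := hx0neg
      simp only [hwdef] at this
      linarith
    have h1 : c x0 * u x0 ≤ M * u x0 :=
      mul_le_mul_of_nonpos_right (hc x0 hx0Rge) (hneg x0)
    have h2 : M * u x0 < M * (-(C * g x0)) := by
      exact mul_lt_mul_of_pos_left hux0 hM
    have h3 : C * ((m - s / ‖x0‖) * g x0) ≤ C * (m * g x0) := by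
      have hsr : 0 < s / ‖x0‖ := div_pos hs hx0pos
      have : (m - s / ‖x0‖) * g x0 ≤ m * g x0 := by
        nlinarith [hgpos x0]
      nlinarith [hC.le]
    have hfin : lap w x0 < 0 := by
      rw [hsplit, hlapu, hlapg]
      have hCg : 0 < C * g x0 := mul_pos hC (hgpos x0)
      nlinarith
    linarith
  -- conclude
  intro x hx
  have h := hclaim x hx
  simp only [hwdef] at h
  have habs : |u x| = -u x := abs_of_nonpos (hneg x)
  rw [habs]
  simp only [hgdef] at h
  linarith
end
end

section
/- Let U be C² with U(1) = 0 and U' > 0, G continuous and positive on [0,1], F' = 2g with g > 0 on (0,1) (so F is increasing there), b > 0, G_N Newton's constant with 8πG_N N < 1, and c ∈ ℝ. Define f(x) = 2 e^{8πG_N(2c - F(e^{u_{0,δ}(x)}))} · U(e^{u_{0,δ}(x)}) / (√G(e^{u_{0,δ}(x)}) √(1 - U(e^{u_{0,δ}(x)})²/b²)) · Π_{s=1}^N (1+|x-p_s|²)^{-8πG_N} + g₀(x), where g₀(x) = Σ_s 4/(1+|x-p_s|²)² and u_{0,δ}(x) = Σ_s ln((δ+|x-p_s|²)/(1+|x-p_s|²))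 with 0 < δ < 1/2. Then there exists c₀ > 0 such that for all c > c₀, f(x) < 0 for all x ∈ ℝ². (Hence u = 0 is a subsolution of the regularized cosmic string equation.) -/
open Real Set

noncomputable section

set_option maxHeartbeats 2000000

/-- The regularized background function. -/
noncomputable def u0δ (N : ℕ) (pts : Fin N → E2) (δ : ℝ) (x : E2) : ℝ :=
  ∑ s : Fin N, Real.log ((δ + ‖x - pts s‖^2) / (1 + ‖x - pts s‖^2))

/-- The background function `g₀ = Σ_s 4/(1+|x-p_s|²)²`. -/
noncomputable def g0 (N : ℕ) (pts : Fin N → E2) (x : E2) : ℝ :=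
  ∑ s : Fin N, 4 / (1 + ‖x - pts s‖^2)^2

/-- The right-hand side `f` of the regularized cosmic string equation evaluated at
`u = 0`. -/
noncomputable def rhs (U G F : ℝ → ℝ) (b GN c δ : ℝ) (N : ℕ) (pts : Fin N → E2)
    (x : E2) : ℝ :=
  2 * Real.exp (8 * π * GN * (2 * c - F (Real.exp (u0δ N pts δ x))))
      * U (Real.exp (u0δ N pts δ x))
    / (Real.sqrt (G (Real.exp (u0δ N pts δ x)))
        * Real.sqrt (1 - (U (Real.exp (u0δ N pts δ x)))^2 / b^2))
    * ∏ s : Fin N, (1 + ‖x - pts s‖^2) ^ (-(8 * π * GN))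
  + g0 N pts x

/-- Lemma 2 of the paper: under the structural assumptions, and
`8πG_N N < 1`, `0 < δ < 1/2`, there is `c₀ > 0` such that for all `c > c₀`,
`f(x) < 0` everywhere; hence `u = 0` is a subsolution of the regularized cosmic
string equation. -/
theorem stmt12 (U G F gg : ℝ → ℝ) (b GN δ : ℝ) (N : ℕ) (pts : Fin N → E2)
    (hN : 0 < N) (hdist : Function.Injective pts)
    (hU : ContDiff ℝ 2 U) (hU1 : U 1 = 0) (hU' : ∀ t, 0 < deriv U t)
    (hGcont : Continuous G) (hGpos : ∀ t ∈ Icc (0:ℝ) 1, 0 < G t)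
    (hF : ∀ t : ℝ, HasDerivAt F (2 * gg t) t)
    (hgg : ∀ t ∈ Ioo (0:ℝ) 1, 0 < gg t)
    (hb : 0 < b) (hUb : ∀ t ∈ Icc (0:ℝ) 1, (U t)^2 < b^2)
    (hGN : 0 < GN) (hGNN : 8 * π * GN * N < 1)
    (hδ0 : 0 < δ) (hδ : δ < 1/2) :
    ∃ c₀ > (0:ℝ), ∀ c > c₀, ∀ x : E2, rhs U G F b GN c δ N pts x < 0 := by
  have hπ : (0:ℝ) < π := Real.pi_pos
  set α : ℝ := 8 * π * GN with hαdef
  have hα : 0 < α := by positivity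
  have hδ1 : δ < 1 := by linarith
  have hδN0 : (0:ℝ) < δ^N := pow_pos hδ0 N
  have hδN1 : δ^N ≤ 1 := pow_le_one₀ hδ0.le hδ1.le
  have hIc : IsCompact (Icc (δ^N) (1:ℝ)) := isCompact_Icc
  have hIne : (Icc (δ^N) (1:ℝ)).Nonempty := Set.nonempty_Icc.2 hδN1
  have hIsub : Icc (δ^N) (1:ℝ) ⊆ Icc 0 1 := Icc_subset_Icc hδN0.le le_rfl
  -- minimum of deriv U on the interval
  have hderivcont : Continuous (deriv U) := hU.continuous_deriv (by norm_num)
  obtain ⟨tm, htmI, htm⟩ := hIc.exists_isMinOn hIne hderivcont.continuousOn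
  set m := deriv U tm with hmdef
  have hm : 0 < m := hU' tm
  have htm' : ∀ y ∈ Icc (δ^N) (1:ℝ), m ≤ deriv U y := htm
  -- maximum of F on the interval
  have hFd : Differentiable ℝ F := fun t => (hF t).differentiableAt
  obtain ⟨tF, htFI, htF⟩ := hIc.exists_isMaxOn hIne hFd.continuous.continuousOn
  set MF := F tF with hMFdef
  have htF' : ∀ y ∈ Icc (δ^N) (1:ℝ), F y ≤ MF := htF
  -- maximum of G on the interval
  obtain ⟨tG, htGI, htG⟩ := hIc.exists_isMaxOn hIne hGcont.continuousOn
  set Gmax := G tG with hGmaxdef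
  have htG' : ∀ y ∈ Icc (δ^N) (1:ℝ), G y ≤ Gmax := htG
  have hGmax : 0 < Gmax := hGpos tG (hIsub htGI)
  have hsG : 0 < Real.sqrt Gmax := Real.sqrt_pos.2 hGmax
  -- bound on the points
  have hNemp : Nonempty (Fin N) := Fin.pos_iff_nonempty.mp hN
  have hNe : (Finset.univ : Finset (Fin N)).Nonempty := Finset.univ_nonempty
  obtain ⟨sR, -, hsR⟩ := Finset.exists_max_image Finset.univ (fun s => ‖pts s‖) hNe
  set R : ℝ := ‖pts sR‖ with hRdef
  have hR : ∀ s, ‖pts s‖ ≤ R := fun s => hsR s (Finset.mem_univ s)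
  have hR0 : 0 ≤ R := norm_nonneg _
  set C : ℝ := 2 + 8 * R^2 with hCdef
  have hC0 : (0:ℝ) < C := by positivity
  set β : ℝ := α * N with hβdef
  have hNpos : (0:ℝ) < (N:ℝ) := by exact_mod_cast hN
  have hβ0 : 0 < β := by positivity
  have hβ1 : β < 1 := by rw [hβdef, hαdef]; exact hGNN
  set K0 : ℝ := 2 * Real.exp (-(α*MF)) * m * (1-δ) * C ^ (-β) / Real.sqrt Gmax with hK0def
  have hK0 : 0 < K0 := by
    apply div_pos _ hsG
    have h1 : (0:ℝ) < Real.exp (-(α*MF)) := Real.exp_pos _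
    have h2 : (0:ℝ) < C ^ (-β) := Real.rpow_pos_of_pos hC0 _
    have h3 : (0:ℝ) < 1 - δ := by linarith
    positivity
  refine ⟨max 1 (Real.log (4*N/K0)/(2*α)), lt_of_lt_of_le one_pos (le_max_left _ _), ?_⟩
  intro c hc x
  -- key exponential bound
  have hexpc : 4*N < K0 * Real.exp (2*α*c) := by
    have hcc : Real.log (4*N/K0)/(2*α) < c := lt_of_le_of_lt (le_max_right _ _) hc
    have h2α : (0:ℝ) < 2*α := by positivity
    have hlog : Real.log (4*N/K0) < 2*α*c := by
      rw [div_lt_iff₀ h2α] at hcc; linarith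
    have h4N : (0:ℝ) < 4*N/K0 := by positivity
    have hlt : 4*N/K0 < Real.exp (2*α*c) := by
      calc 4*N/K0 = Real.exp (Real.log (4*N/K0)) := (Real.exp_log h4N).symm
        _ < Real.exp (2*α*c) := Real.exp_lt_exp.2 hlog
    calc 4*N = (4*N/K0) * K0 := (div_mul_cancel₀ _ hK0.ne').symm
      _ < Real.exp (2*α*c) * K0 := mul_lt_mul_of_pos_right hlt hK0
      _ = K0 * Real.exp (2*α*c) := by ring
  -- basic per-point facts
  have hq1 : ∀ s : Fin N, (1:ℝ) ≤ 1 + ‖x - pts s‖^2 := fun s => by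
    linarith only [sq_nonneg ‖x - pts s‖]
  have hq0 : ∀ s : Fin N, (0:ℝ) < 1 + ‖x - pts s‖^2 := fun s =>
    lt_of_lt_of_le one_pos (hq1 s)
  have ha_pos : ∀ s : Fin N, 0 < (δ + ‖x - pts s‖^2)/(1 + ‖x - pts s‖^2) := fun s =>
    div_pos (by linarith only [sq_nonneg ‖x - pts s‖, hδ0]) (hq0 s)
  have ha_lt1 : ∀ s : Fin N, (δ + ‖x - pts s‖^2)/(1 + ‖x - pts s‖^2) < 1 := fun s => by
    rw [div_lt_one (hq0 s)]; linarith
  have ha_ge : ∀ s : Fin N, δ ≤ (δ + ‖x - pts s‖^2)/(1 + ‖x - pts s‖^2) := fun s => by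
    rw [le_div_iff₀ (hq0 s)]
    have hk : δ * (1 + ‖x - pts s‖^2) = δ + ‖x - pts s‖^2 - (1-δ)*‖x - pts s‖^2 := by
      ring
    have hnn : 0 ≤ (1-δ)*‖x - pts s‖^2 :=
      mul_nonneg (by linarith only [hδ1]) (sq_nonneg _)
    linarith only [hk, hnn]
  set t := Real.exp (u0δ N pts δ x) with htdef
  have htprod : t = ∏ s : Fin N, (δ + ‖x - pts s‖^2)/(1 + ‖x - pts s‖^2) := by
    rw [htdef, u0δ, Real.exp_sum]
    exact Finset.prod_congr rfl fun s _ => Real.exp_log (ha_pos s)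
  have ht_lb : δ^N ≤ t := by
    rw [htprod]
    calc δ^N = ∏ _s : Fin N, δ := by simp
      _ ≤ ∏ s : Fin N, (δ + ‖x - pts s‖^2)/(1 + ‖x - pts s‖^2) :=
          Finset.prod_le_prod (fun _ _ => hδ0.le) (fun s _ => ha_ge s)
  -- the closest point
  obtain ⟨s0, -, hs0⟩ := Finset.exists_min_image Finset.univ
    (fun s : Fin N => 1 + ‖x - pts s‖^2) hNe
  have hs0' : ∀ s, 1 + ‖x - pts s0‖^2 ≤ 1 + ‖x - pts s‖^2 := fun s => by
    simpa using hs0 s (Finset.mem_univ s)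
  have hQ1 : (1:ℝ) ≤ 1 + ‖x - pts s0‖^2 := hq1 s0
  have hQ0 : (0:ℝ) < 1 + ‖x - pts s0‖^2 := hq0 s0
  have ht_ub : t ≤ (δ + ‖x - pts s0‖^2)/(1 + ‖x - pts s0‖^2) := by
    rw [htprod, ← Finset.mul_prod_erase _ _ (Finset.mem_univ s0)]
    have hple : ∏ s ∈ Finset.univ.erase s0, (δ + ‖x - pts s‖^2)/(1 + ‖x - pts s‖^2) ≤ 1 :=
      Finset.prod_le_one (fun s _ => (ha_pos s).le) (fun s _ => (ha_lt1 s).le)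
    have h := mul_le_mul_of_nonneg_left hple (ha_pos s0).le
    rw [mul_one] at h
    exact h
  have ht1 : t < 1 := lt_of_le_of_lt ht_ub (ha_lt1 s0)
  have htI : t ∈ Icc (δ^N) (1:ℝ) := ⟨ht_lb, ht1.le⟩
  have h1t : (1-δ)/(1 + ‖x - pts s0‖^2) ≤ 1 - t := by
    have hsum : (δ + ‖x - pts s0‖^2)/(1 + ‖x - pts s0‖^2)
        + (1-δ)/(1 + ‖x - pts s0‖^2) = 1 := by
      have hr : (δ + ‖x - pts s0‖^2) + (1-δ) = 1 + ‖x - pts s0‖^2 := by ring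
      rw [← add_div, hr]
      exact div_self hQ0.ne'
    linarith [ht_ub, hsum]
  have h1t0 : 0 < 1 - t := by
    have : 0 < (1-δ)/(1 + ‖x - pts s0‖^2) := div_pos (by linarith) hQ0
    linarith
  -- mean value theorem bound on U
  have hUd : Differentiable ℝ U := hU.differentiable (by norm_num)
  obtain ⟨ξ, hξ, hslope⟩ := exists_deriv_eq_slope U ht1 hUd.continuous.continuousOn
    hUd.differentiableOn
  have hξI : ξ ∈ Icc (δ^N) (1:ℝ) := ⟨le_trans ht_lb hξ.1.le, hξ.2.le⟩
  have hUt : U t ≤ -(m * (1 - t)) := by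
    have hmξ : m ≤ deriv U ξ := htm' ξ hξI
    have heq : deriv U ξ * (1 - t) = U 1 - U t := by
      rw [hslope]
      exact div_mul_cancel₀ _ h1t0.ne'
    rw [hU1] at heq
    have hmm := mul_le_mul_of_nonneg_right hmξ h1t0.le
    linarith only [hmm, heq]
  have hUtneg : U t < 0 := lt_of_le_of_lt hUt
    (by have := mul_pos hm h1t0; linarith only [this])
  -- denominator bounds
  have hGt : 0 < G t := hGpos t (hIsub htI)
  have hUb' : (U t)^2 < b^2 := hUb t (hIsub htI)
  have hrad : 0 < 1 - (U t)^2/b^2 := by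
    have : (U t)^2/b^2 < 1 := (div_lt_one (by positivity)).2 hUb'
    linarith
  set D := Real.sqrt (G t) * Real.sqrt (1 - (U t)^2 / b^2) with hDdef
  have hD0 : 0 < D := mul_pos (Real.sqrt_pos.2 hGt) (Real.sqrt_pos.2 hrad)
  have hDle : D ≤ Real.sqrt Gmax := by
    have h9 : 0 ≤ (U t)^2/b^2 := by positivity
    have hs1 : Real.sqrt (1 - (U t)^2/b^2) ≤ 1 :=
      Real.sqrt_le_one.2 (by linarith only [h9])
    calc D ≤ Real.sqrt (G t) * 1 := mul_le_mul_of_nonneg_left hs1 (Real.sqrt_nonneg _)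
      _ = Real.sqrt (G t) := mul_one _
      _ ≤ Real.sqrt Gmax := Real.sqrt_le_sqrt (htG' t htI)
  -- exponential factor bound
  set E := Real.exp (α * (2 * c - F t)) with hEdef
  have hE : Real.exp (2*α*c) * Real.exp (-(α*MF)) ≤ E := by
    rw [hEdef, ← Real.exp_add]
    apply Real.exp_le_exp.2
    have hFt : F t ≤ MF := htF' t htI
    have := mul_le_mul_of_nonneg_left hFt hα.le
    linarith only [this]
  have hE0 : 0 < E := Real.exp_pos _
  -- product bound
  set P := ∏ s : Fin N, (1 + ‖x - pts s‖^2) ^ (-α) with hPdef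
  have hqC : ∀ s : Fin N, 1 + ‖x - pts s‖^2 ≤ C * (1 + ‖x - pts s0‖^2) := by
    intro s
    have h1 : ‖x - pts s‖ ≤ ‖x - pts s0‖ + 2*R := by
      calc ‖x - pts s‖ = ‖(x - pts s0) + (pts s0 - pts s)‖ := by abel_nf
        _ ≤ ‖x - pts s0‖ + ‖pts s0 - pts s‖ := norm_add_le _ _
        _ ≤ ‖x - pts s0‖ + (‖pts s0‖ + ‖pts s‖) := by
            have := norm_sub_le (pts s0) (pts s); linarith
        _ ≤ ‖x - pts s0‖ + 2*R := by have := hR s0; have := hR s; linarith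
    have h2 : ‖x - pts s‖^2 ≤ (‖x - pts s0‖ + 2*R)^2 :=
      pow_le_pow_left₀ (norm_nonneg _) h1 2
    rw [hCdef]
    have f1 : ‖x - pts s‖^2 ≤ ‖x - pts s0‖^2 + 4*(R*‖x - pts s0‖) + 4*R^2 := by
      rw [show ‖x - pts s0‖^2 + 4*(R*‖x - pts s0‖) + 4*R^2 = (‖x - pts s0‖ + 2*R)^2
        by ring]
      exact h2
    have f2 := sq_nonneg (‖x - pts s0‖ - 2*R)
    have f2e : (‖x - pts s0‖ - 2*R)^2
        = ‖x - pts s0‖^2 - 4*(R*‖x - pts s0‖) + 4*R^2 := by ring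
    have f3 : (0:ℝ) ≤ R^2*‖x - pts s0‖^2 := by positivity
    have f4 : (0:ℝ) ≤ R^2 := sq_nonneg R
    have f5 := sq_nonneg ‖x - pts s0‖
    linarith only [f1, f2, f2e, f3, f4, f5]
  have hCQ0 : (0:ℝ) < C * (1 + ‖x - pts s0‖^2) := mul_pos hC0 hQ0
  have hP : (C * (1 + ‖x - pts s0‖^2)) ^ (-β) ≤ P := by
    have step1 : (C * (1 + ‖x - pts s0‖^2)) ^ (-β)
        = ((C * (1 + ‖x - pts s0‖^2)) ^ (-α)) ^ N := by
      rw [← Real.rpow_natCast ((C * (1 + ‖x - pts s0‖^2)) ^ (-α)) N,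
        ← Real.rpow_mul hCQ0.le]
      congr 1
      rw [hβdef]; ring
    rw [step1, hPdef]
    calc ((C * (1 + ‖x - pts s0‖^2)) ^ (-α)) ^ N
        = ∏ _s : Fin N, (C * (1 + ‖x - pts s0‖^2)) ^ (-α) := by simp
      _ ≤ ∏ s : Fin N, (1 + ‖x - pts s‖^2) ^ (-α) := Finset.prod_le_prod
          (fun s _ => (Real.rpow_pos_of_pos hCQ0 _).le)
          (fun s _ => Real.rpow_le_rpow_of_nonpos (hq0 s) (hqC s) (by linarith))
  have hP0 : 0 < P := by
    rw [hPdef]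
    exact Finset.prod_pos fun s _ => Real.rpow_pos_of_pos (hq0 s) _
  -- bound on g0
  have hg0 : g0 N pts x ≤ 4*N/(1 + ‖x - pts s0‖^2)^2 := by
    rw [g0]
    calc ∑ s : Fin N, 4 / (1 + ‖x - pts s‖^2)^2
        ≤ ∑ _s : Fin N, 4/(1 + ‖x - pts s0‖^2)^2 := by
          apply Finset.sum_le_sum
          intro s _
          have hqs := hs0' s
          rw [div_le_div_iff₀ (by positivity) (by positivity)]
          have h9 := mul_self_le_mul_self hQ0.le hqs
          linarith only [h9]
      _ = 4*N/(1 + ‖x - pts s0‖^2)^2 := by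
          rw [Finset.sum_const]
          simp [Finset.card_univ]
          ring
  -- main term bound
  have hmain : K0 * Real.exp (2*α*c) * (1 + ‖x - pts s0‖^2) ^ (-(1+β))
      ≤ 2 * E * (-(U t)) / D * P := by
    have hQsplit : (1 + ‖x - pts s0‖^2) ^ (-(1+β))
        = (1 + ‖x - pts s0‖^2)⁻¹ * (1 + ‖x - pts s0‖^2) ^ (-β) := by
      rw [show -(1+β) = (-1) + (-β) by ring, Real.rpow_add hQ0, Real.rpow_neg_one]
    have heq : K0 * Real.exp (2*α*c) * (1 + ‖x - pts s0‖^2) ^ (-(1+β))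
        = 2 * (Real.exp (2*α*c) * Real.exp (-(α*MF)))
            * (m*(1-δ)/(1 + ‖x - pts s0‖^2)) / Real.sqrt Gmax
          * (C ^ (-β) * (1 + ‖x - pts s0‖^2) ^ (-β)) := by
      rw [hQsplit, hK0def]
      simp only [div_eq_mul_inv]
      ring
    rw [heq]
    have hnum : m*(1-δ)/(1 + ‖x - pts s0‖^2) ≤ -(U t) := by
      have h1 : m * ((1-δ)/(1 + ‖x - pts s0‖^2)) ≤ m * (1-t) :=
        mul_le_mul_of_nonneg_left h1t hm.le
      have h2 : m*(1-δ)/(1 + ‖x - pts s0‖^2) = m * ((1-δ)/(1 + ‖x - pts s0‖^2)) := by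
        ring
      linarith
    have hnum0 : 0 < m*(1-δ)/(1 + ‖x - pts s0‖^2) := by
      exact div_pos (mul_pos hm (by linarith only [hδ1])) hQ0
    have hee0 : 0 ≤ Real.exp (2*α*c) * Real.exp (-(α*MF)) := by positivity
    have hUt0 : 0 ≤ -(U t) := by linarith only [hUtneg]
    have hEnn : 0 ≤ 2 * E := by linarith only [hE0]
    have htop : 0 ≤ 2 * E * (-(U t)) := mul_nonneg hEnn hUt0
    have htop2 : 0 ≤ 2 * E * (-(U t)) / D := div_nonneg htop hD0.le
    have hfrac : 2 * (Real.exp (2*α*c) * Real.exp (-(α*MF)))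
          * (m*(1-δ)/(1 + ‖x - pts s0‖^2)) / Real.sqrt Gmax
        ≤ 2 * E * (-(U t)) / D := by
      apply div_le_div₀ htop
        (mul_le_mul (mul_le_mul_of_nonneg_left hE (by norm_num)) hnum hnum0.le hEnn)
        hD0 hDle
    have hmulP : C ^ (-β) * (1 + ‖x - pts s0‖^2) ^ (-β) ≤ P := by
      rw [← Real.mul_rpow hC0.le hQ0.le]; exact hP
    apply mul_le_mul hfrac hmulP
      (mul_nonneg (Real.rpow_pos_of_pos hC0 _).le (Real.rpow_pos_of_pos hQ0 _).le)
      htop2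
  -- final comparison
  have hcomp : 4*N/(1 + ‖x - pts s0‖^2)^2
      < K0 * Real.exp (2*α*c) * (1 + ‖x - pts s0‖^2) ^ (-(1+β)) := by
    have hQm2 : (1 + ‖x - pts s0‖^2)^(2:ℕ) * (1 + ‖x - pts s0‖^2) ^ (-(2:ℝ)) = 1 := by
      rw [← Real.rpow_natCast (1 + ‖x - pts s0‖^2) 2, ← Real.rpow_add hQ0]
      norm_num
    have h1 : 4*(N:ℝ)/(1 + ‖x - pts s0‖^2)^2
        = 4*(N:ℝ) * (1 + ‖x - pts s0‖^2) ^ (-(2:ℝ)) := by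
      rw [div_eq_iff (by positivity : ((1:ℝ) + ‖x - pts s0‖^2)^2 ≠ 0)]
      calc 4*(N:ℝ)
          = ((1 + ‖x - pts s0‖^2)^(2:ℕ) * (1 + ‖x - pts s0‖^2) ^ (-(2:ℝ)))
              * (4*(N:ℝ)) := by rw [hQm2]; ring
        _ = 4*(N:ℝ) * (1 + ‖x - pts s0‖^2) ^ (-(2:ℝ)) * (1 + ‖x - pts s0‖^2)^2 := by
              ring
    have h2 : (1 + ‖x - pts s0‖^2) ^ (-(2:ℝ)) ≤ (1 + ‖x - pts s0‖^2) ^ (-(1+β)) := by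
      apply Real.rpow_le_rpow_of_exponent_le hQ1
      linarith only [hβ1, hβ0]
    have hQe0 : 0 < (1 + ‖x - pts s0‖^2) ^ (-(1+β)) := Real.rpow_pos_of_pos hQ0 _
    calc 4*N/(1 + ‖x - pts s0‖^2)^2 = 4*N * (1 + ‖x - pts s0‖^2) ^ (-(2:ℝ)) := h1
      _ ≤ 4*N * (1 + ‖x - pts s0‖^2) ^ (-(1+β)) :=
          mul_le_mul_of_nonneg_left h2 (by positivity)
      _ < (K0 * Real.exp (2*α*c)) * (1 + ‖x - pts s0‖^2) ^ (-(1+β)) :=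
          mul_lt_mul_of_pos_right hexpc hQe0
      _ = K0 * Real.exp (2*α*c) * (1 + ‖x - pts s0‖^2) ^ (-(1+β)) := by ring
  -- put everything together
  unfold rhs
  rw [← hαdef, ← htdef, ← hEdef, ← hDdef, ← hPdef]
  have hid : 2 * E * U t / D * P = -(2 * E * (-(U t)) / D * P) := by ring
  rw [hid]
  linarith only [hmain, hg0, hcomp]
end
end

section
/- Let F, U : ℝ → ℝ and b > 0 with |U(t)| < b, and set 𝔉 = √(1 + G·B²/b²), 𝔘 = √(1 - U²/b²) for real numbers G > 0 and B. Then the completed-square identity b²(𝔉 - 1) + V = ½(B√G ± 𝔉U)²𝔉^{-1} + (b²/2)(𝔉𝔘 - 1)²𝔉^{-1} - b² ∓ B√G·U + b²𝔘 + V holds, where V = b²(1 - 𝔘); in particular b²(𝔉-1) + b²(1-𝔘) ≥ ∓ B√G·U, with equality iff B√G ± 𝔉U = 0 (which also forces 𝔉𝔘 = 1). -/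
/-!
Write `β = B√G`, so that `b²𝔉² = b² + β²` and `b²𝔘² = b² - U²`. Expanding the two squares and
eliminating `β²` and `𝔘²` with these relations turns the right-hand side into the left-hand side.
Both squares are nonnegative since `𝔉 > 0`, which gives the lower bound; at equality the first
square vanishes, and conversely `β + 𝔉U = 0` forces `b²(𝔉𝔘)² = 𝔉²(b² - U²) = b² + β² - β² = b²`,
so `𝔉𝔘 = 1` and the second square vanishes as well. The other sign is the same statement for
`-U`, which leaves `𝔘` unchanged.
-/

open Real

namespace Bogomolny

variable {b F u β U : ℝ}

theorem energy_eq_completedSquare (hF : b ^ 2 * F ^ 2 = b ^ 2 + β ^ 2)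
    (hu : b ^ 2 * u ^ 2 = b ^ 2 - U ^ 2) (hF0 : F ≠ 0) :
    b ^ 2 * (F - 1) + b ^ 2 * (1 - u)
      = (1 / 2) * (β + F * U) ^ 2 * F⁻¹ + (b ^ 2 / 2) * (F * u - 1) ^ 2 * F⁻¹ - β * U := by
  field_simp
  linear_combination hF - F ^ 2 * hu

theorem mul_eq_one_of_add_eq_zero (hF : b ^ 2 * F ^ 2 = b ^ 2 + β ^ 2)
    (hu : b ^ 2 * u ^ 2 = b ^ 2 - U ^ 2) (hb : b ≠ 0) (hF0 : 0 < F) (hu0 : 0 ≤ u)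
    (h : β + F * U = 0) : F * u = 1 := by
  have hsq : b ^ 2 * (F * u) ^ 2 = b ^ 2 * 1 ^ 2 := by
    linear_combination F ^ 2 * hu + hF + (β - F * U) * h
  exact (sq_eq_sq₀ (by positivity) zero_le_one).mp (mul_left_cancel₀ (pow_ne_zero 2 hb) hsq)

theorem neg_mul_le_energy (hF : b ^ 2 * F ^ 2 = b ^ 2 + β ^ 2)
    (hu : b ^ 2 * u ^ 2 = b ^ 2 - U ^ 2) (hF0 : 0 < F) :
    -(β * U) ≤ b ^ 2 * (F - 1) + b ^ 2 * (1 - u) := by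
  rw [energy_eq_completedSquare hF hu hF0.ne']
  have : 0 ≤ (1 / 2) * (β + F * U) ^ 2 * F⁻¹ + (b ^ 2 / 2) * (F * u - 1) ^ 2 * F⁻¹ := by
    positivity
  linarith

theorem energy_eq_neg_mul_iff (hF : b ^ 2 * F ^ 2 = b ^ 2 + β ^ 2)
    (hu : b ^ 2 * u ^ 2 = b ^ 2 - U ^ 2) (hb : b ≠ 0) (hF0 : 0 < F) (hu0 : 0 ≤ u) :
    b ^ 2 * (F - 1) + b ^ 2 * (1 - u) = -(β * U) ↔ β + F * U = 0 := by
  rw [energy_eq_completedSquare hF hu hF0.ne']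
  constructor
  · intro h
    have h₁ : 0 ≤ (1 / 2) * (β + F * U) ^ 2 * F⁻¹ := by positivity
    have h₂ : 0 ≤ (b ^ 2 / 2) * (F * u - 1) ^ 2 * F⁻¹ := by positivity
    have : (1 / 2) * (β + F * U) ^ 2 * F⁻¹ = 0 := by linarith
    simpa [hF0.ne'] using this
  · intro h
    rw [h, mul_eq_one_of_add_eq_zero hF hu hb hF0 hu0 h]
    ring

end Bogomolny

open Bogomolny

theorem stmt15_general (b G B U : ℝ) (hG : 0 < G) (hU : |U| < b) :
    let 𝔉 := Real.sqrt (1 + G * B^2 / b^2)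
    let 𝔘 := Real.sqrt (1 - U^2 / b^2)
    let V := b^2 * (1 - 𝔘)
    (b^2 * (𝔉 - 1) + V
        = (1/2) * (B * Real.sqrt G + 𝔉 * U)^2 * 𝔉⁻¹
          + (b^2/2) * (𝔉 * 𝔘 - 1)^2 * 𝔉⁻¹
          - b^2 - B * Real.sqrt G * U + b^2 * 𝔘 + V)
    ∧ (b^2 * (𝔉 - 1) + V
        = (1/2) * (B * Real.sqrt G - 𝔉 * U)^2 * 𝔉⁻¹
          + (b^2/2) * (𝔉 * 𝔘 - 1)^2 * 𝔉⁻¹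
          - b^2 + B * Real.sqrt G * U + b^2 * 𝔘 + V)
    ∧ (b^2 * (𝔉 - 1) + b^2 * (1 - 𝔘) ≥ -(B * Real.sqrt G * U)
        ∧ (b^2 * (𝔉 - 1) + b^2 * (1 - 𝔘) = -(B * Real.sqrt G * U)
            ↔ B * Real.sqrt G + 𝔉 * U = 0))
    ∧ (b^2 * (𝔉 - 1) + b^2 * (1 - 𝔘) ≥ B * Real.sqrt G * U
        ∧ (b^2 * (𝔉 - 1) + b^2 * (1 - 𝔘) = B * Real.sqrt G * U
            ↔ B * Real.sqrt G - 𝔉 * U = 0))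
    ∧ (B * Real.sqrt G + 𝔉 * U = 0 → 𝔉 * 𝔘 = 1)
    ∧ (B * Real.sqrt G - 𝔉 * U = 0 → 𝔉 * 𝔘 = 1) := by
  intro F u V
  have hb0 : b ≠ 0 := (abs_nonneg U |>.trans_lt hU).ne'
  have hU2 : U ^ 2 ≤ b ^ 2 := sq_le_sq' (abs_lt.mp hU).1.le (abs_lt.mp hU).2.le
  have hF : b ^ 2 * F ^ 2 = b ^ 2 + (B * √G) ^ 2 := by
    rw [sq_sqrt (by positivity), mul_pow, sq_sqrt hG.le]
    field_simp
  have hu : b ^ 2 * u ^ 2 = b ^ 2 - U ^ 2 := by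
    rw [sq_sqrt (by rw [sub_nonneg]; exact div_le_one_of_le₀ hU2 (sq_nonneg b))]
    field_simp
  have hu' : b ^ 2 * u ^ 2 = b ^ 2 - (-U) ^ 2 := by rw [neg_sq]; exact hu
  have hF0 : 0 < F := sqrt_pos.mpr (by positivity)
  have hu0 : 0 ≤ u := sqrt_nonneg _
  have plus := energy_eq_completedSquare hF hu hF0.ne'
  have minus := energy_eq_completedSquare hF hu' hF0.ne'
  refine ⟨by linear_combination plus, by linear_combination minus,
    ⟨neg_mul_le_energy hF hu hF0, energy_eq_neg_mul_iff hF hu hb0 hF0 hu0⟩, ⟨?_, ?_⟩,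
    mul_eq_one_of_add_eq_zero hF hu hb0 hF0 hu0,
    fun h => mul_eq_one_of_add_eq_zero hF hu' hb0 hF0 hu0 (by linear_combination h)⟩
  · simpa using neg_mul_le_energy hF hu' hF0
  · simpa [← sub_eq_add_neg] using energy_eq_neg_mul_iff hF hu' hb0 hF0 hu0

/-- the completed-square (Bogomolny) identity at the core of the BPS
reduction, for both signs, together with the resulting lower bound
`b²(𝔉-1) + b²(1-𝔘) ≥ ∓ B√G·U`, with equality iff `B√G ± 𝔉U = 0` (which also
forces `𝔉𝔘 = 1`). -/
theorem stmt15 (b G B U : ℝ) (hb : 0 < b) (hG : 0 < G) (hU : |U| < b) :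
    let 𝔉 := Real.sqrt (1 + G * B^2 / b^2)
    let 𝔘 := Real.sqrt (1 - U^2 / b^2)
    let V := b^2 * (1 - 𝔘)
    (b^2 * (𝔉 - 1) + V
        = (1/2) * (B * Real.sqrt G + 𝔉 * U)^2 * 𝔉⁻¹
          + (b^2/2) * (𝔉 * 𝔘 - 1)^2 * 𝔉⁻¹
          - b^2 - B * Real.sqrt G * U + b^2 * 𝔘 + V)
    ∧ (b^2 * (𝔉 - 1) + V
        = (1/2) * (B * Real.sqrt G - 𝔉 * U)^2 * 𝔉⁻¹
          + (b^2/2) * (𝔉 * 𝔘 - 1)^2 * 𝔉⁻¹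
          - b^2 + B * Real.sqrt G * U + b^2 * 𝔘 + V)
    ∧ (b^2 * (𝔉 - 1) + b^2 * (1 - 𝔘) ≥ -(B * Real.sqrt G * U)
        ∧ (b^2 * (𝔉 - 1) + b^2 * (1 - 𝔘) = -(B * Real.sqrt G * U)
            ↔ B * Real.sqrt G + 𝔉 * U = 0))
    ∧ (b^2 * (𝔉 - 1) + b^2 * (1 - 𝔘) ≥ B * Real.sqrt G * U
        ∧ (b^2 * (𝔉 - 1) + b^2 * (1 - 𝔘) = B * Real.sqrt G * U
            ↔ B * Real.sqrt G - 𝔉 * U = 0))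
    ∧ (B * Real.sqrt G + 𝔉 * U = 0 → 𝔉 * 𝔘 = 1)
    ∧ (B * Real.sqrt G - 𝔉 * U = 0 → 𝔉 * 𝔘 = 1) :=
  stmt15_general b G B U hG hU
end

section
/- Suppose B√G + 𝔉 U = 0 where 𝔉 = √(1 + G B²/b²), 0 < G, b > 0, and |U| < b. Then 𝔉·√(1 - U²/b²) = 1, and consequently B = -U/(√G · √(1 - U²/b²)). -/
open Real

/-!
In the dimensionless variables `x = √G B / b` and `u = U / b` the equation reads
`x + √(1 + x²) u = 0`, so `x² = (1 + x²) u²` and hence `(1 + x²)(1 - u²) = 1`.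
Multiplying `B √G = -𝔉 U` by `√(1 - U²/b²)` then gives `B √G √(1 - U²/b²) = -U`.
-/

theorem sqrt_one_add_sq_mul_sqrt_one_sub_sq_eq_one {x u : ℝ} (h : x + √(1 + x ^ 2) * u = 0) :
    √(1 + x ^ 2) * √(1 - u ^ 2) = 1 := by
  have hsq : √(1 + x ^ 2) ^ 2 = 1 + x ^ 2 := sq_sqrt (by positivity)
  have key : (1 + x ^ 2) * (1 - u ^ 2) = 1 := by
    linear_combination (x - √(1 + x ^ 2) * u) * h + u ^ 2 * hsq
  rw [← sqrt_mul (by positivity), key, sqrt_one]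

theorem stmt16_general (b G B U : ℝ) (hG : 0 < G)
    (hbps : B * Real.sqrt G + Real.sqrt (1 + G * B^2 / b^2) * U = 0) :
    Real.sqrt (1 + G * B^2 / b^2) * Real.sqrt (1 - U^2 / b^2) = 1
    ∧ B = -U / (Real.sqrt G * Real.sqrt (1 - U^2 / b^2)) := by
  have hF : 1 + G * B ^ 2 / b ^ 2 = 1 + (√G * B / b) ^ 2 := by
    rw [div_pow, mul_pow, sq_sqrt hG.le]
  have hrescaled : √G * B / b + √(1 + (√G * B / b) ^ 2) * (U / b) = 0 := by
    rw [← hF, ← mul_div_assoc, ← add_div, mul_comm, hbps, zero_div]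
  have first : √(1 + G * B ^ 2 / b ^ 2) * √(1 - U ^ 2 / b ^ 2) = 1 := by
    rw [hF, ← div_pow]
    exact sqrt_one_add_sq_mul_sqrt_one_sub_sq_eq_one hrescaled
  refine ⟨first, ?_⟩
  rw [eq_div_iff (mul_ne_zero (sqrt_pos.2 hG).ne' (right_ne_zero_of_mul_eq_one first))]
  linear_combination √(1 - U ^ 2 / b ^ 2) * hbps - U * first

/-- the first BPS equation `B√G + 𝔉U = 0` with
`𝔉 = √(1 + GB²/b²)` forces `𝔉·√(1 - U²/b²) = 1` and yields the explicit
solution `B = -U/(√G·√(1 - U²/b²))` for the magnetic field. -/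
theorem stmt16 (b G B U : ℝ) (hb : 0 < b) (hG : 0 < G) (hU : |U| < b)
    (hbps : B * Real.sqrt G + Real.sqrt (1 + G * B^2 / b^2) * U = 0) :
    Real.sqrt (1 + G * B^2 / b^2) * Real.sqrt (1 - U^2 / b^2) = 1
    ∧ B = -U / (Real.sqrt G * Real.sqrt (1 - U^2 / b^2)) :=
  stmt16_general b G B U hG hbps
end

section
/- Let g : ℝ → ℝ be C¹ and define w(t) = 2(g'(t)·t + g(t)). For a C² complex field φ and C¹ gauge field A on ℝ² with D_kφ = ∂_kφ - iA_kφ and F₁₂ = ∂₁A₂ - ∂₂A₁, define J_k = i g(|φ|²)(φ·conj(D_kφ) - conj(φ)·D_kφ). Then ∂₁J₂ - ∂₂J₁ = 2i(g'(|φ|²)|φ|² + g(|φ|²))(D₁φ·conj(D₂φ) - conj(D₁φ)·D₂φ) - 2g(|φ|²)|φ|²F₁₂ pointwise. -/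
open Real Complex

noncomputable section

/-- Real partial derivative in the `i`-th coordinate direction. -/
noncomputable def pd (i : Fin 2) (f : E2 → ℝ) (x : E2) : ℝ :=
  fderiv ℝ f x (EuclideanSpace.single i 1)

/-- Complex partial derivative in the `i`-th coordinate direction. -/
noncomputable def pdC (i : Fin 2) (f : E2 → ℂ) (x : E2) : ℂ :=
  fderiv ℝ f x (EuclideanSpace.single i 1)

/-- Covariant derivative `D_k φ = ∂_k φ - i A_k φ`. -/
noncomputable def covD (k : Fin 2) (φ : E2 → ℂ) (A : Fin 2 → E2 → ℝ) (x : E2) : ℂ :=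
  pdC k φ x - Complex.I * (A k x) * φ x

/-- The supercurrent `J_k = i g(|φ|²)(φ conj(D_kφ) - conj(φ) D_kφ)`. -/
noncomputable def Jc (k : Fin 2) (g : ℝ → ℝ) (φ : E2 → ℂ) (A : Fin 2 → E2 → ℝ)
    (x : E2) : ℂ :=
  Complex.I * (g (Complex.normSq (φ x)) : ℂ) *
    (φ x * (starRingEnd ℂ) (covD k φ A x) - (starRingEnd ℂ) (φ x) * covD k φ A x)

section helpers

variable {f h : E2 → ℂ} {r : E2 → ℝ} {φ : E2 → ℂ} {x : E2} {i : Fin 2}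

lemma pdC_sub (hf : DifferentiableAt ℝ f x) (hh : DifferentiableAt ℝ h x) :
    pdC i (fun y => f y - h y) x = pdC i f x - pdC i h x := by
  simp [pdC, fderiv_fun_sub hf hh]

lemma pdC_mul (hf : DifferentiableAt ℝ f x) (hh : DifferentiableAt ℝ h x) :
    pdC i (fun y => f y * h y) x = pdC i f x * h x + f x * pdC i h x := by
  simp [pdC, fderiv_fun_mul hf hh]; ring

lemma pdC_const_mul (c : ℂ) (hf : DifferentiableAt ℝ f x) :
    pdC i (fun y => c * f y) x = c * pdC i f x := by
  simp [pdC, fderiv_const_mul hf c]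

lemma pdC_conj (hf : DifferentiableAt ℝ f x) :
    pdC i (fun y => (starRingEnd ℂ) (f y)) x = (starRingEnd ℂ) (pdC i f x) := by
  have h1 : HasFDerivAt (fun y => (starRingEnd ℂ) (f y))
      ((Complex.conjCLE.toContinuousLinearMap).comp (fderiv ℝ f x)) x :=
    (Complex.conjCLE.toContinuousLinearMap.hasFDerivAt).comp x hf.hasFDerivAt
  simp [pdC, h1.fderiv]

lemma pdC_ofReal (hr : DifferentiableAt ℝ r x) :
    pdC i (fun y => (r y : ℂ)) x = ((pd i r x : ℝ) : ℂ) := by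
  have h1 : HasFDerivAt (fun y => (r y : ℂ))
      (Complex.ofRealCLM.comp (fderiv ℝ r x)) x :=
    Complex.ofRealCLM.hasFDerivAt.comp x hr.hasFDerivAt
  simp [pdC, pd, h1.fderiv]

lemma pd_comp {g : ℝ → ℝ} (hg : ContDiff ℝ 1 g) (hr : DifferentiableAt ℝ r x) :
    pd i (fun y => g (r y)) x = deriv g (r x) * pd i r x := by
  have h1 : HasDerivAt g (deriv g (r x)) (r x) :=
    ((hg.differentiable one_ne_zero) (r x)).hasDerivAt
  have h2 := h1.comp_hasFDerivAt x hr.hasFDerivAt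
  have h3 : fderiv ℝ (fun y => g (r y)) x = deriv g (r x) • fderiv ℝ r x := h2.fderiv
  simp [pd, h3]

lemma diff_pdC (hφ : ContDiff ℝ 2 φ) (k : Fin 2) : Differentiable ℝ (pdC k φ) := by
  have h1 : ContDiff ℝ 1 (fderiv ℝ φ) := hφ.fderiv_right (m := 1) (by norm_num)
  exact (h1.clm_apply contDiff_const).differentiable one_ne_zero

lemma pdC_symm (hφ : ContDiff ℝ 2 φ) (x : E2) :
    pdC 0 (pdC 1 φ) x = pdC 1 (pdC 0 φ) x := by
  have hsym : IsSymmSndFDerivAt ℝ φ x := hφ.contDiffAt.isSymmSndFDerivAt (by norm_num)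
  have hc : DifferentiableAt ℝ (fderiv ℝ φ) x :=
    ((hφ.fderiv_right (m := 1) (by norm_num)).differentiable one_ne_zero) x
  have key : ∀ v w : E2, fderiv ℝ (fun y => fderiv ℝ φ y w) x v
      = fderiv ℝ (fderiv ℝ φ) x v w := by
    intro v w
    rw [fderiv_clm_apply hc (differentiableAt_const w)]
    simp
  show fderiv ℝ (fun y => fderiv ℝ φ y (EuclideanSpace.single 1 1)) x (EuclideanSpace.single 0 1)
      = fderiv ℝ (fun y => fderiv ℝ φ y (EuclideanSpace.single 0 1)) x (EuclideanSpace.single 1 1)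
  rw [key, key, hsym]

lemma diff_normSq (hφ : ContDiff ℝ 2 φ) :
    Differentiable ℝ (fun y => Complex.normSq (φ y)) := by
  have h : (fun y => Complex.normSq (φ y)) = fun y => ‖φ y‖ ^ 2 := by
    funext y; simp [Complex.normSq_eq_norm_sq]
  rw [h]
  exact ((hφ.norm_sq (𝕜 := ℂ)).differentiable (by norm_num))

lemma diff_conj (hf : Differentiable ℝ f) :
    Differentiable ℝ (fun y => (starRingEnd ℂ) (f y)) := by
  have := Complex.conjCLE.differentiable.comp hf
  simpa [Function.comp_def] using this

end helpers

/-- the curl of the supercurrent satisfies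
`∂₁J₂ - ∂₂J₁ = 2i(g'(|φ|²)|φ|² + g(|φ|²))(D₁φ conj(D₂φ) - conj(D₁φ) D₂φ)
  - 2g(|φ|²)|φ|² F₁₂` pointwise. -/
theorem stmt17 (g : ℝ → ℝ) (φ : E2 → ℂ) (A : Fin 2 → E2 → ℝ)
    (hg : ContDiff ℝ 1 g) (hφ : ContDiff ℝ 2 φ)
    (hA : ∀ k, ContDiff ℝ 1 (A k)) (x : E2) :
    pdC 0 (Jc 1 g φ A) x - pdC 1 (Jc 0 g φ A) x
      = 2 * Complex.I *
          ((deriv g (Complex.normSq (φ x)) * Complex.normSq (φ x)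
              + g (Complex.normSq (φ x)) : ℝ) : ℂ) *
          (covD 0 φ A x * (starRingEnd ℂ) (covD 1 φ A x)
            - (starRingEnd ℂ) (covD 0 φ A x) * covD 1 φ A x)
        - 2 * ((g (Complex.normSq (φ x)) * Complex.normSq (φ x) : ℝ) : ℂ) *
            ((pd 0 (A 1) x - pd 1 (A 0) x : ℝ) : ℂ) := by
  have hφ1 : Differentiable ℝ φ := hφ.differentiable (by norm_num)
  have hP : ∀ k, Differentiable ℝ (pdC k φ) := diff_pdC hφ
  have hns : Differentiable ℝ (fun y => Complex.normSq (φ y)) := diff_normSq hφ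
  have hgr : Differentiable ℝ (fun y => g (Complex.normSq (φ y))) :=
    (hg.differentiable one_ne_zero).comp hns
  have hgrC : Differentiable ℝ (fun y => ((g (Complex.normSq (φ y)) : ℝ) : ℂ)) :=
    Complex.ofRealCLM.differentiable.comp hgr
  have hAd : ∀ k, Differentiable ℝ (A k) := fun k => (hA k).differentiable one_ne_zero
  have hAC : ∀ k, Differentiable ℝ (fun y => ((A k y : ℝ) : ℂ)) :=
    fun k => Complex.ofRealCLM.differentiable.comp (hAd k)
  have hcov : ∀ k, Differentiable ℝ (fun y => covD k φ A y) := by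
    intro k
    simp only [covD]
    exact (hP k).sub ((((differentiable_const Complex.I).mul (hAC k))).mul hφ1)
  -- derivative of the covariant derivative
  have hW : ∀ i k : Fin 2, pdC i (fun y => covD k φ A y) x
      = pdC i (pdC k φ) x - Complex.I * ((pd i (A k) x : ℝ) : ℂ) * φ x
        - Complex.I * ((A k x : ℝ) : ℂ) * pdC i φ x := by
    intro i k
    have e1 : (fun y => covD k φ A y)
        = fun y => pdC k φ y - Complex.I * (((A k y : ℝ) : ℂ) * φ y) := by
      funext y; simp [covD]; ring
    rw [e1, pdC_sub (hP k x) ((((hAC k).fun_mul hφ1).const_mul Complex.I) x),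
      pdC_const_mul _ (((hAC k).fun_mul hφ1) x), pdC_mul ((hAC k) x) (hφ1 x),
      pdC_ofReal ((hAd k) x)]
    ring
  -- derivative of the supercurrent
  have hJ : ∀ i k : Fin 2, pdC i (Jc k g φ A) x
      = Complex.I * ((deriv g (Complex.normSq (φ x))
            * pd i (fun y => Complex.normSq (φ y)) x : ℝ) : ℂ)
          * (φ x * (starRingEnd ℂ) (covD k φ A x)
              - (starRingEnd ℂ) (φ x) * covD k φ A x)
        + Complex.I * ((g (Complex.normSq (φ x)) : ℝ) : ℂ)
          * (pdC i φ x * (starRingEnd ℂ) (covD k φ A x)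
              + φ x * (starRingEnd ℂ) (pdC i (fun y => covD k φ A y) x)
              - (starRingEnd ℂ) (pdC i φ x) * covD k φ A x
              - (starRingEnd ℂ) (φ x) * pdC i (fun y => covD k φ A y) x) := by
    intro i k
    have hB : Differentiable ℝ (fun y => φ y * (starRingEnd ℂ) (covD k φ A y)
        - (starRingEnd ℂ) (φ y) * covD k φ A y) :=
      (hφ1.mul (diff_conj (hcov k))).sub ((diff_conj hφ1).mul (hcov k))
    have e1 : Jc k g φ A = fun y => Complex.I * (((g (Complex.normSq (φ y)) : ℝ) : ℂ)
        * (φ y * (starRingEnd ℂ) (covD k φ A y)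
            - (starRingEnd ℂ) (φ y) * covD k φ A y)) := by
      funext y; simp [Jc]; ring
    rw [e1, pdC_const_mul _ ((hgrC.fun_mul hB) x), pdC_mul (hgrC x) (hB x),
      pdC_ofReal (hgr x), pd_comp hg (hns x),
      pdC_sub ((hφ1.fun_mul (diff_conj (hcov k))) x) (((diff_conj hφ1).fun_mul (hcov k)) x),
      pdC_mul (hφ1 x) ((diff_conj (hcov k)) x),
      pdC_mul ((diff_conj hφ1) x) ((hcov k) x),
      pdC_conj ((hcov k) x), pdC_conj (hφ1 x)]
    ring
  -- the gradient of |φ|² in complex form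
  have hm : ∀ i : Fin 2, ((pd i (fun y => Complex.normSq (φ y)) x : ℝ) : ℂ)
      = pdC i φ x * (starRingEnd ℂ) (φ x) + φ x * (starRingEnd ℂ) (pdC i φ x) := by
    intro i
    rw [← pdC_ofReal (hns x)]
    have e2 : (fun y => ((Complex.normSq (φ y) : ℝ) : ℂ))
        = fun y => φ y * (starRingEnd ℂ) (φ y) := by
      funext y; exact (Complex.mul_conj _).symm
    rw [e2, pdC_mul (hφ1 x) ((diff_conj hφ1) x), pdC_conj (hφ1 x)]
  have hsymm : pdC 0 (pdC 1 φ) x = pdC 1 (pdC 0 φ) x := pdC_symm hφ x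
  rw [hJ 0 1, hJ 1 0, hW 0 1, hW 1 0, hsymm]
  push_cast
  rw [hm 0, hm 1]
  simp only [covD, map_sub, map_mul, map_add, Complex.conj_I, Complex.conj_ofReal]
  simp only [← Complex.mul_conj]
  ring_nf
  simp only [Complex.I_sq]
  ring
end
end
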